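/- arXiv:2301.07384 — 2 statements merged into one kernel-verified Lean document; each statement's English description precedes it below -/
import Mathlib

section
/- Let G : {0,1}^d → ({0,1}^t)^m be a function that m-simultaneously ε-fools width-w, length-t unanimity programs, and let Ext : {0,1}^d × {0,1}^{d_Ext} → {0,1}^d be a (d − log(1/ε), ε)-extractor. Then the function G'(s, s') = (G(s), G(Ext(s, s'))) on seed length d + d_Ext 2m-simultaneously 3ε-fools width-w, length-t unanimity programs. -/
/-- Probability of an event under the uniform distribution on a finite type. -/
noncomputable def unifPr (Ω : Type) [Fintype Ω] (P : Ω → Prop) : ℝ :=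
  (Nat.card {ω // P ω} : ℝ) / (Fintype.card Ω)

/-- Bit strings of length `n`. -/
abbrev Bits (n : ℕ) := Fin n → Bool

/-- Extend a finite bit string to an infinite one (padding with `false`). -/
def extBits {t : ℕ} (x : Bits t) : ℕ → Bool :=
  fun i => if h : i < t then x ⟨i, h⟩ else false

/-- A unanimity program of length `n` with state set `Q`: it has an initial state,
a transition function for each layer, and accepting state sets for each layer;
it accepts iff every state visited (after each of the `n` steps) is accepting. -/
structure UP (Q : Type) (n : ℕ) where
  init : Q
  trans : ℕ → Q → Bool → Q
  acc : ℕ → Q → Prop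

namespace UP
variable {Q : Type} {n : ℕ}

/-- The state after reading `i` bits of `x`. -/
def st (P : UP Q n) (x : ℕ → Bool) : ℕ → Q
  | 0 => P.init
  | i + 1 => P.trans i (st P x i) (x i)

/-- Unanimous acceptance: all states after steps `1, …, n` are accepting. -/
def accepts (P : UP Q n) (x : ℕ → Bool) : Prop :=
  ∀ i, 1 ≤ i → i ≤ n → P.acc i (st P x i)

/-- Running the program from state `q` at layer `i` on a word. -/
def runFrom (P : UP Q n) : ℕ → Q → List Bool → Q
  | _, q, [] => q
  | i, q, b :: bs => runFrom P (i + 1) (P.trans i q b) bs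

/-- A state is reachable in layer `i` if some input leads to it. -/
def Reachable (P : UP Q n) (i : ℕ) (q : Q) : Prop :=
  ∃ x : ℕ → Bool, st P x i = q

/-- Sliding-window property of window size `t`: reading any `t`-bit word from any
two reachable states of layer `i ≤ n - t` leads to the same state. -/
def IsSWBP (P : UP Q n) (t : ℕ) : Prop :=
  ∀ i, i ≤ n - t → ∀ y : List Bool, y.length = t →
    ∀ q q', Reachable P i q → Reachable P i q' →
      runFrom P i q y = runFrom P i q' y

/-- Acceptance of a length-`n` input. -/
def acceptsInput (P : UP Q n) (x : Bits n) : Prop := P.accepts (extBits x)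

end UP

/-- Interleaving `x₁y₁x₂y₂⋯x_my_m` of two `m`-tuples of `t`-bit blocks, as an
infinite bit string (positions beyond `2tm` are `false`). -/
def il {m t : ℕ} (x y : Fin m → Bits t) : ℕ → Bool := fun j =>
  if h : j / t / 2 < m ∧ j % t < t then
    (if (j / t) % 2 = 0 then x ⟨j / t / 2, h.1⟩ ⟨j % t, h.2⟩
     else y ⟨j / t / 2, h.1⟩ ⟨j % t, h.2⟩)
  else false

/-- `X` (a random variable on the finite uniform sample space `Ω`)
`m`-simultaneously `ε`-fools width-`w`, length-`t` unanimity programs. -/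
noncomputable def SimulFools (w t m : ℕ) (ε : ℝ) {Ω : Type} [Fintype Ω]
    (X : Ω → Fin m → Bits t) : Prop :=
  ∀ f : Fin m → UP (Fin w) t,
    |unifPr Ω (fun ω => ∀ i, (f i).acceptsInput (X ω i)) -
      ∏ i : Fin m, unifPr (Bits t) (fun u => (f i).acceptsInput u)| ≤ ε

/-- `X` `m`-simultaneously `ε`-hits width-`w`, length-`t` unanimity programs. -/
noncomputable def SimulHits (w t m : ℕ) (ε : ℝ) {Ω : Type} [Fintype Ω]
    (X : Ω → Fin m → Bits t) : Prop :=
  ∀ f : Fin m → UP (Fin w) t,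
    unifPr (Fin m → Bits t) (fun u => ∀ i, (f i).acceptsInput (u i)) ≥ ε →
    ∃ ω, ∀ i, (f i).acceptsInput (X ω i)

/-- A generator `G` `ε`-fools width-`w`, length-`t` unanimity programs. -/
noncomputable def Fools (w t d : ℕ) (ε : ℝ) (G : Bits d → Bits t) : Prop :=
  ∀ P : UP (Fin w) t,
    |unifPr (Bits d) (fun s => P.acceptsInput (G s)) -
      unifPr (Bits t) (fun u => P.acceptsInput u)| ≤ ε

/-- Statistical distance between (the distributions of) two random variables. -/
noncomputable def SD {Ω₁ Ω₂ V : Type} [Fintype Ω₁] [Fintype Ω₂] [Fintype V]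
    (X : Ω₁ → V) (Y : Ω₂ → V) : ℝ :=
  (1 / 2) * ∑ v : V, |unifPr Ω₁ (fun ω => X ω = v) - unifPr Ω₂ (fun ω => Y ω = v)|

/-- A `(k, ε)`-extractor: for every source of min-entropy at least `k`
(every point has probability at most `2^(-k)`), the output is `ε`-close to uniform. -/
noncomputable def IsExtractor {nn dd mm : ℕ} (k ε : ℝ)
    (Ext : Bits nn → Bits dd → Bits mm) : Prop :=
  ∀ (Ω : Type) [Fintype Ω], ∀ Z : Ω → Bits nn,
    (∀ v, unifPr Ω (fun ω => Z ω = v) ≤ (2 : ℝ) ^ (-k)) →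
    SD (fun p : Ω × Bits dd => Ext (Z p.1) p.2) (id : Bits mm → Bits mm) ≤ ε

/-- A standard (ordered read-once) branching program: accepts based only on its
final state. -/
structure BP (Q : Type) (n : ℕ) where
  init : Q
  trans : ℕ → Q → Bool → Q
  accFinal : Q → Prop

namespace BP
variable {Q : Type} {n : ℕ}

def st (P : BP Q n) (x : ℕ → Bool) : ℕ → Q
  | 0 => P.init
  | i + 1 => P.trans i (st P x i) (x i)

def acceptsInput (P : BP Q n) (x : Bits n) : Prop := P.accFinal (st P (extBits x) n)

def runFrom (P : BP Q n) : ℕ → Q → List Bool → Q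
  | _, q, [] => q
  | i, q, b :: bs => runFrom P (i + 1) (P.trans i q b) bs

def Reachable (P : BP Q n) (i : ℕ) (q : Q) : Prop :=
  ∃ x : ℕ → Bool, st P x i = q

end BP

/-- A probabilistic ACA (PACA): two local transition functions selected by a coin,
with boundary symbols modeled via `Option`, and a set of accepting states. -/
structure PACA (Q : Type) where
  delta : Bool → Option Q → Q → Option Q → Q
  acc : Q → Prop

/-- Neighboring cell content (`none` beyond the boundary). -/
def nbOpt {Q : Type} {n : ℕ} (s : Fin n → Q) (j : ℤ) : Option Q :=
  if h : 0 ≤ j ∧ j < n then some (s ⟨j.toNat, by omega⟩) else none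

namespace PACA
variable {Q : Type} {n : ℕ}

/-- One global step with coin tosses `r` (cell `i` uses `δ_{r i}`). -/
def step (C : PACA Q) (s : Fin n → Q) (r : Fin n → Bool) : Fin n → Q :=
  fun i => C.delta (r i) (nbOpt s ((i : ℤ) - 1)) (s i) (nbOpt s ((i : ℤ) + 1))

/-- The configuration after `k` steps on input `x` with coin matrix `R`. -/
def conf (C : PACA Q) (x : Fin n → Q) (R : ℕ → Fin n → Bool) : ℕ → Fin n → Q
  | 0 => x
  | k + 1 => C.step (conf C x R k) (R k)

/-- All cells are simultaneously accepting. -/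
def allAcc (C : PACA Q) (s : Fin n → Q) : Prop := ∀ i, C.acc (s i)

end PACA

/-- Extend a `T × n` coin matrix to all times (all-`false` rows beyond `T`). -/
def extR {T n : ℕ} (R : Fin T → Fin n → Bool) : ℕ → Fin n → Bool :=
  fun k => if h : k < T then R ⟨k, h⟩ else fun _ => false

/-- Simultaneous hitting for an abstract class `F` of predicates on `V`. -/
noncomputable def SimulHitsF {V : Type} [Fintype V] (F : Set (V → Prop)) (m : ℕ) (ε : ℝ)
    {Ω : Type} [Fintype Ω] (X : Ω → Fin m → V) : Prop :=
  ∀ f : Fin m → V → Prop, (∀ i, f i ∈ F) →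
    unifPr (Fin m → V) (fun u => ∀ i, f i (u i)) ≥ ε →
    ∃ ω, ∀ i, f i (X ω i)

section Helpers
open Finset
variable {Ω Ω' V : Type} [Fintype Ω] [Fintype Ω'] [Fintype V]

lemma unifPr_eq_filter (P : Ω → Prop) [DecidablePred P] :
    unifPr Ω P = ((univ.filter P).card : ℝ) / (Fintype.card Ω) := by
  unfold unifPr
  rw [Nat.card_eq_fintype_card, Fintype.card_subtype]

lemma unifPr_nonneg (P : Ω → Prop) : 0 ≤ unifPr Ω P := by
  unfold unifPr; positivity

lemma unifPr_mono {P Q : Ω → Prop} (h : ∀ ω, P ω → Q ω) : unifPr Ω P ≤ unifPr Ω Q := by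
  classical
  rw [unifPr_eq_filter, unifPr_eq_filter]
  gcongr
  exact h _

lemma unifPr_le_one (P : Ω → Prop) : unifPr Ω P ≤ 1 := by
  classical
  rw [unifPr_eq_filter]
  apply div_le_one_of_le₀
  · exact_mod_cast Finset.card_filter_le _ _
  · positivity

lemma unifPr_congr {P Q : Ω → Prop} (h : ∀ ω, P ω ↔ Q ω) : unifPr Ω P = unifPr Ω Q := by
  unfold unifPr
  congr 2
  exact Nat.card_congr (Equiv.subtypeEquivRight h)

lemma sum_unifPr_fiber [Nonempty Ω] (X : Ω → V) :
    ∑ v : V, unifPr Ω (fun ω => X ω = v) = 1 := by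
  classical
  have hcard : ∑ v : V, ((univ.filter fun ω => X ω = v).card : ℝ) = Fintype.card Ω := by
    norm_cast
    exact (Finset.card_eq_sum_card_fiberwise (f := X) (t := univ) (fun x _ => mem_univ _)).symm
  have h0 : (Fintype.card Ω : ℝ) ≠ 0 := by
    exact_mod_cast (Fintype.card_pos).ne'
  simp only [unifPr_eq_filter]
  rw [← Finset.sum_div, hcard, div_self h0]

lemma unifPr_comp_eq_sum (X : Ω → V) (S : V → Prop) [DecidablePred S] :
    unifPr Ω (fun ω => S (X ω)) = ∑ v ∈ univ.filter S, unifPr Ω (fun ω => X ω = v) := by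
  classical
  simp only [unifPr_eq_filter]
  rw [← Finset.sum_div]
  congr 1
  norm_cast
  rw [Finset.card_eq_sum_card_fiberwise (f := X) (t := univ.filter S)
    (fun x hx => by simpa using (mem_filter.mp hx).2)]
  apply Finset.sum_congr rfl
  intro v hv
  congr 1
  ext ω
  simp only [mem_filter, mem_univ, true_and]
  constructor
  · exact fun h => h.2
  · intro h; exact ⟨by rw [h]; exact (mem_filter.mp hv).2, h⟩

lemma abs_sub_le_SD [Nonempty Ω] [Nonempty Ω'] (X : Ω → V) (Y : Ω' → V)
    (S : V → Prop) [inst : DecidablePred S] :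
    |unifPr Ω (fun ω => S (X ω)) - unifPr Ω' (fun ω => S (Y ω))| ≤ SD X Y := by
  classical
  set dd : V → ℝ := fun v => unifPr Ω (fun ω => X ω = v) - unifPr Ω' (fun ω => Y ω = v) with hd
  have hsum0 : ∑ v : V, dd v = 0 := by
    simp only [hd, Finset.sum_sub_distrib, sum_unifPr_fiber]; ring
  have hsplit : ∑ v ∈ univ.filter S, dd v + ∑ v ∈ univ.filter (fun v => ¬ S v), dd v = 0 := by
    rw [Finset.sum_filter_add_sum_filter_not]; exact hsum0
  have heq : unifPr Ω (fun ω => S (X ω)) - unifPr Ω' (fun ω => S (Y ω))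
      = ∑ v ∈ univ.filter S, dd v := by
    rw [unifPr_comp_eq_sum X S, unifPr_comp_eq_sum Y S, ← Finset.sum_sub_distrib]
  rw [heq]
  have h1 : |∑ v ∈ univ.filter S, dd v| ≤ ∑ v ∈ univ.filter S, |dd v| :=
    Finset.abs_sum_le_sum_abs _ _
  have h2 : |∑ v ∈ univ.filter (fun v => ¬ S v), dd v|
      ≤ ∑ v ∈ univ.filter (fun v => ¬ S v), |dd v| := Finset.abs_sum_le_sum_abs _ _
  have h3 : |∑ v ∈ univ.filter S, dd v| = |∑ v ∈ univ.filter (fun v => ¬ S v), dd v| := by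
    rw [show ∑ v ∈ univ.filter S, dd v = -(∑ v ∈ univ.filter (fun v => ¬ S v), dd v) by
      linarith, abs_neg]
  have h4 : ∑ v ∈ univ.filter S, |dd v| + ∑ v ∈ univ.filter (fun v => ¬ S v), |dd v|
      = ∑ v : V, |dd v| := Finset.sum_filter_add_sum_filter_not _ _ _
  have hSD : SD X Y = (1/2) * ∑ v : V, |dd v| := rfl
  rw [hSD]
  linarith

lemma unifPr_fst [Nonempty Ω'] (A : Ω → Prop) :
    unifPr (Ω × Ω') (fun p => A p.1) = unifPr Ω A := by
  unfold unifPr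
  have e : {p : Ω × Ω' // A p.1} ≃ {a : Ω // A a} × Ω' :=
    { toFun := fun p => (⟨p.1.1, p.2⟩, p.1.2)
      invFun := fun q => ⟨(q.1.val, q.2), q.1.property⟩
      left_inv := fun p => rfl
      right_inv := fun q => rfl }
  classical
  rw [Nat.card_congr e]
  simp only [Nat.card_eq_fintype_card, Fintype.card_prod]
  have h' : (Fintype.card Ω' : ℝ) ≠ 0 := by
    exact_mod_cast (Fintype.card_pos).ne'
  push_cast
  rw [mul_comm (Fintype.card Ω : ℝ), ← div_div, mul_div_assoc, div_self h', mul_one]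

lemma unifPr_cond_prod [Nonempty Ω'] (A : Ω → Prop) [DecidablePred A] (C : Ω × Ω' → Prop)
    (hA : Nat.card {a // A a} ≠ 0) :
    unifPr (Ω × Ω') (fun p => A p.1 ∧ C p)
      = unifPr Ω A * unifPr ({a // A a} × Ω') (fun q => C (q.1.val, q.2)) := by
  unfold unifPr
  have e : {p : Ω × Ω' // A p.1 ∧ C p} ≃ {q : {a // A a} × Ω' // C (q.1.val, q.2)} :=
    { toFun := fun p => ⟨(⟨p.1.1, p.2.1⟩, p.1.2), p.2.2⟩
      invFun := fun q => ⟨(q.1.1.val, q.1.2), ⟨q.1.1.property, q.2⟩⟩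
      left_inv := fun p => rfl
      right_inv := fun q => rfl }
  classical
  rw [Nat.card_congr e]
  have hΩ : Fintype.card Ω ≠ 0 := by
    intro h
    have h2 := Fintype.card_eq_zero_iff.mp h
    obtain ⟨⟨a⟩, -⟩ := Nat.card_pos_iff.mp (Nat.pos_of_ne_zero hA)
    exact h2.false a.1
  simp only [Nat.card_eq_fintype_card, Fintype.card_prod]
  have h1 : (Fintype.card Ω : ℝ) ≠ 0 := by exact_mod_cast hΩ
  have h2 : (Fintype.card Ω' : ℝ) ≠ 0 := by
    exact_mod_cast (Fintype.card_pos).ne'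
  have h3 : (Fintype.card {a // A a} : ℝ) ≠ 0 := by
    rw [← Nat.card_eq_fintype_card]; exact_mod_cast hA
  push_cast
  field_simp

lemma abs_sub_le_of_SD_le {Ω V : Type} [Fintype Ω] [Fintype V] [Nonempty Ω] [Nonempty V]
    (X : Ω → V) (B : V → Prop) {ε : ℝ} (h : SD X (id : V → V) ≤ ε) :
    |unifPr Ω (fun q => B (X q)) - unifPr V B| ≤ ε := by
  classical
  have h2 := abs_sub_le_SD X (id : V → V) B
  have h3 : unifPr V (fun v => B (id v)) = unifPr V B := rfl
  rw [h3] at h2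
  exact h2.trans h

end Helpers
set_option maxHeartbeats 1000000 in
/-- seed recycling via an extractor: from an `m`-simultaneous
`ε`-fooling generator and a `(d - log(1/ε), ε)`-extractor, the generator
`G'(s, s') = (G(s), G(Ext(s, s')))` `2m`-simultaneously `3ε`-fools
width-`w`, length-`t` unanimity programs. -/
theorem extractor_doubling_step {w t m d dE : ℕ} {ε : ℝ} (hε : 0 < ε)
    (G : Bits d → Fin m → Bits t) (hG : SimulFools w t m ε G)
    (Ext : Bits d → Bits dE → Bits d)
    (hExt : IsExtractor ((d : ℝ) - Real.logb 2 (1 / ε)) ε Ext) :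
    SimulFools w t (2 * m) (3 * ε)
      (fun p : Bits d × Bits dE => fun i : Fin (2 * m) =>
        if h : (i : ℕ) < m then G p.1 ⟨(i : ℕ), h⟩
        else G (Ext p.1 p.2) ⟨(i : ℕ) - m, by have := i.isLt; omega⟩) := by
  classical
  intro f
  set e₁ : Fin m → Fin (2 * m) := fun j => ⟨(j : ℕ), by have := j.isLt; omega⟩ with he₁
  set e₂ : Fin m → Fin (2 * m) := fun j => ⟨m + (j : ℕ), by have := j.isLt; omega⟩ with he₂
  have hGA := hG (fun j => f (e₁ j))
  have hGB := hG (fun j => f (e₂ j))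
  set A : Bits d → Prop := fun s => ∀ j : Fin m, (f (e₁ j)).acceptsInput (G s j) with hAdef
  set B : Bits d → Prop := fun s => ∀ j : Fin m, (f (e₂ j)).acceptsInput (G s j) with hBdef
  set α : ℝ := unifPr (Bits d) A with hαdef
  set β₀ : ℝ := unifPr (Bits d) B with hβ₀def
  set α' : ℝ := ∏ j : Fin m, unifPr (Bits t) fun u => (f (e₁ j)).acceptsInput u with hα'def
  set β' : ℝ := ∏ j : Fin m, unifPr (Bits t) fun u => (f (e₂ j)).acceptsInput u with hβ'def
  -- the product over Fin (2*m) splits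
  have hprod : ∏ i : Fin (2 * m), unifPr (Bits t) (fun u => (f i).acceptsInput u)
      = α' * β' := by
    set E : Fin m ⊕ Fin m ≃ Fin (2 * m) :=
      finSumFinEquiv.trans (finCongr (by omega)) with hEdef
    rw [← Equiv.prod_comp E (fun i => unifPr (Bits t) (fun u => (f i).acceptsInput u)),
      Fintype.prod_sum_type]
    have h1 : ∀ j : Fin m, E (Sum.inl j) = e₁ j := fun j => by
      apply Fin.ext; simp [hEdef, he₁]
    have h2 : ∀ j : Fin m, E (Sum.inr j) = e₂ j := fun j => by
      apply Fin.ext; simp [hEdef, he₂, Nat.add_comm]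
    simp only [h1, h2]
    rfl
  -- the acceptance event splits
  have hevent : ∀ p : Bits d × Bits dE,
      (∀ i : Fin (2 * m), (f i).acceptsInput
        (if h : (i : ℕ) < m then G p.1 ⟨(i : ℕ), h⟩
         else G (Ext p.1 p.2) ⟨(i : ℕ) - m, by have := i.isLt; omega⟩))
      ↔ (A p.1 ∧ B (Ext p.1 p.2)) := by
    intro p
    constructor
    · intro h
      constructor
      · intro j
        have hj := h (e₁ j)
        rw [dif_pos (show ((e₁ j : Fin (2 * m)) : ℕ) < m from j.isLt)] at hj
        exact hj
      · intro j
        have hj := h (e₂ j)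
        rw [dif_neg (show ¬ ((e₂ j : Fin (2 * m)) : ℕ) < m by simp [he₂])] at hj
        convert hj using 2
        apply Fin.ext
        show (j : ℕ) = (m + (j : ℕ)) - m
        omega
    · rintro ⟨hA, hB⟩ i
      by_cases hi : (i : ℕ) < m
      · rw [dif_pos hi]
        have := hA ⟨(i : ℕ), hi⟩
        have h2 : e₁ ⟨(i : ℕ), hi⟩ = i := Fin.ext rfl
        rwa [h2] at this
      · rw [dif_neg hi]
        have := hB ⟨(i : ℕ) - m, by have := i.isLt; omega⟩
        have h2 : e₂ ⟨(i : ℕ) - m, by have := i.isLt; omega⟩ = i := by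
          apply Fin.ext
          show m + ((i : ℕ) - m) = (i : ℕ)
          omega
        rwa [h2] at this
  have hrw := unifPr_congr (Ω := Bits d × Bits dE) hevent
  show |unifPr (Bits d × Bits dE)
      (fun p => ∀ i : Fin (2 * m), (f i).acceptsInput
        (if h : (i : ℕ) < m then G p.1 ⟨(i : ℕ), h⟩
         else G (Ext p.1 p.2) ⟨(i : ℕ) - m, by have := i.isLt; omega⟩)) -
      ∏ i : Fin (2 * m), unifPr (Bits t) fun u => (f i).acceptsInput u| ≤ 3 * ε
  rw [hrw, hprod]
  set π : ℝ := unifPr (Bits d × Bits dE) (fun p => A p.1 ∧ B (Ext p.1 p.2)) with hπdef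
  -- generic bounds
  have hα0 : 0 ≤ α := unifPr_nonneg _
  have hα1 : α ≤ 1 := unifPr_le_one _
  have hβ₀0 : 0 ≤ β₀ := unifPr_nonneg _
  have hβ₀1 : β₀ ≤ 1 := unifPr_le_one _
  have hα'0 : 0 ≤ α' := Finset.prod_nonneg fun j _ => unifPr_nonneg _
  have hα'1 : α' ≤ 1 :=
    Finset.prod_le_one (fun j _ => unifPr_nonneg _) (fun j _ => unifPr_le_one _)
  have hβ'0 : 0 ≤ β' := Finset.prod_nonneg fun j _ => unifPr_nonneg _
  have hβ'1 : β' ≤ 1 :=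
    Finset.prod_le_one (fun j _ => unifPr_nonneg _) (fun j _ => unifPr_le_one _)
  have hπ0 : 0 ≤ π := unifPr_nonneg _
  have hπα : π ≤ α := by
    rw [hπdef, hαdef]
    exact (unifPr_mono fun p hp => hp.1).trans_eq (unifPr_fst A)
  obtain ⟨hGA1, hGA2⟩ := abs_le.mp hGA
  obtain ⟨hGB1, hGB2⟩ := abs_le.mp hGB
  by_cases hcase : α < ε
  · -- small case: everything is tiny
    have h5 : α' * β' ≤ α' := by nlinarith
    have h6 : 0 ≤ α' * β' := mul_nonneg hα'0 hβ'0
    rw [abs_le]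
    constructor <;> nlinarith
  · push_neg at hcase
    -- the conditioned source
    have hcardA : Nat.card {s // A s} ≠ 0 := by
      intro h0
      have : α = 0 := by
        rw [hαdef]; unfold unifPr; rw [h0]; simp
      linarith
    haveI hne : Nonempty {s // A s} :=
      (Nat.card_pos_iff.mp (Nat.pos_of_ne_zero hcardA)).1
    set γ : ℝ := unifPr ({s // A s} × Bits dE)
      (fun q => B (Ext ((fun (ω : {s // A s}) => ω.val) q.1) q.2)) with hγdef
    have hγ0 : 0 ≤ γ := unifPr_nonneg _
    have hγ1 : γ ≤ 1 := unifPr_le_one _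
    -- conditional decomposition
    have hcond : π = α * γ := by
      rw [hπdef, hαdef, hγdef]
      exact unifPr_cond_prod A (fun p => B (Ext p.1 p.2)) hcardA
    -- min-entropy of the conditioned source
    have hment : ∀ v, unifPr {s // A s} (fun ω => (fun (ω : {s // A s}) => ω.val) ω = v)
        ≤ (2 : ℝ) ^ (-((d : ℝ) - Real.logb 2 (1 / ε))) := by
      intro v
      have hsub : Subsingleton {ω : {s // A s} // (fun (ω : {s // A s}) => ω.val) ω = v} :=
        ⟨fun a b => Subtype.ext (Subtype.ext (a.2.trans b.2.symm))⟩
      have h1 : unifPr {s // A s} (fun ω => (fun (ω : {s // A s}) => ω.val) ω = v)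
          ≤ 1 / (Nat.card {s // A s}) := by
        unfold unifPr
        rw [← Nat.card_eq_fintype_card]
        gcongr
        exact_mod_cast @Finite.card_le_one_iff_subsingleton _ _ |>.mpr hsub
      have hcardBits : (Fintype.card (Bits d) : ℝ) = 2 ^ d := by
        simp [Fintype.card_fun]
      have h2 : ε * 2 ^ d ≤ (Nat.card {s // A s} : ℝ) := by
        have : α = (Nat.card {s // A s} : ℝ) / 2 ^ d := by
          rw [hαdef]; unfold unifPr; rw [hcardBits]
        rw [this] at hcase
        have h2d : (0:ℝ) < 2 ^ d := by positivity
        calc ε * 2 ^ d ≤ (Nat.card {s // A s} : ℝ) / 2 ^ d * 2 ^ d := by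
              exact mul_le_mul_of_nonneg_right hcase (le_of_lt h2d)
          _ = _ := by field_simp
      have h3 : (0:ℝ) < ε * 2 ^ d := by positivity
      have h4 : 1 / (Nat.card {s // A s} : ℝ) ≤ 1 / (ε * 2 ^ d) :=
        one_div_le_one_div_of_le h3 h2
      have h5 : (2 : ℝ) ^ (-((d : ℝ) - Real.logb 2 (1 / ε))) = 1 / (ε * 2 ^ d) := by
        rw [neg_sub, Real.rpow_sub two_pos, Real.rpow_logb two_pos (by norm_num)
          (by positivity), Real.rpow_natCast]
        field_simp
      rw [h5]
      exact h1.trans h4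
    have hSD := hExt {s // A s} (fun ω => ω.val) hment
    have hγβ : |γ - β₀| ≤ ε := abs_sub_le_of_SD_le _ B hSD
    obtain ⟨hγβ1, hγβ2⟩ := abs_le.mp hγβ
    rw [hcond, abs_le]
    have e1 : α * γ - α' * β' = α * (γ - β₀) + β₀ * (α - α') + α' * (β₀ - β') := by ring
    constructor <;> nlinarith
end

section
/- Key decomposition: let S be a width-w, length-2tm SWBP of window size t and fix x = (x₁,…,x_m) ∈ ({0,1}^t)^m. Then there exist width-w, length-t unanimity programs S_x^1,…,S_x^m such that for every y = (y₁,…,y_m) ∈ ({0,1}^t)^m, S accepts x ⋈ y if and only if S_x^i accepts y_i for every i ∈ [m]. -/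
/-!
By the window property, the state of `S` at the start of the block `yᵢ` is determined by the
block `xᵢ` read just before it, so the layers of `S` over `yᵢ`, started in that state, form a
program in `yᵢ` alone. The layers over `xᵢ₊₁` depend on `y` only through the state reached at
the end of `yᵢ`, so their acceptance is folded into the accepting set of the last layer of
`S_x^i`; the acceptance of the first block `x₁` is a constant condition, folded in the same way.
-/

namespace UP

variable {Q : Type} {n : ℕ}

def AcceptsLayers (P : UP Q n) (c : ℕ → Bool) (a len : ℕ) : Prop :=
  ∀ k, 1 ≤ k → k ≤ len → P.acc (a + k) (P.st c (a + k))

theorem accepts_iff_acceptsLayers (P : UP Q n) (c : ℕ → Bool) :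
    P.accepts c ↔ P.AcceptsLayers c 0 n := by
  simp only [accepts, AcceptsLayers, Nat.zero_add]

theorem acceptsLayers_add (P : UP Q n) (c : ℕ → Bool) (a l₁ l₂ : ℕ) :
    P.AcceptsLayers c a (l₁ + l₂) ↔ P.AcceptsLayers c a l₁ ∧ P.AcceptsLayers c (a + l₁) l₂ := by
  constructor
  · intro h
    refine ⟨fun k hk1 hk2 => h k hk1 (by omega), fun k hk1 hk2 => ?_⟩
    rw [Nat.add_assoc]
    exact h (l₁ + k) (by omega) (by omega)
  · rintro ⟨h₁, h₂⟩ k hk1 hk2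
    by_cases hk : k ≤ l₁
    · exact h₁ k hk1 hk
    · have := h₂ (k - l₁) (by omega) (by omega)
      rwa [Nat.add_assoc, Nat.add_sub_cancel' (by omega)] at this

theorem acceptsLayers_mul (P : UP Q n) (c : ℕ → Bool) (a l : ℕ) :
    ∀ B, P.AcceptsLayers c a (B * l) ↔ ∀ b < B, P.AcceptsLayers c (a + b * l) l
  | 0 => iff_of_true (fun k _ hk => by omega) fun b hb => by omega
  | B + 1 => by
    rw [Nat.succ_mul, acceptsLayers_add, acceptsLayers_mul P c a l B, Nat.forall_lt_succ_right]

theorem st_add (P : UP Q n) (c : ℕ → Bool) :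
    ∀ a l, P.st c (a + l) = P.runFrom a (P.st c a) (List.ofFn fun j : Fin l => c (a + j))
  | a, 0 => rfl
  | a, l + 1 => by
    rw [show a + (l + 1) = a + 1 + l by omega, st_add P c (a + 1) l, List.ofFn_succ]
    simp only [runFrom, st, Fin.val_zero, Nat.add_zero, Fin.val_succ, Nat.add_right_comm a 1,
      Nat.add_assoc]

theorem IsSWBP.st_eq {t : ℕ} {P : UP Q n} (hP : P.IsSWBP t) {c c' : ℕ → Bool} {a : ℕ}
    (ha : a + t ≤ n) (hc : ∀ j < t, c (a + j) = c' (a + j)) :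
    P.st c (a + t) = P.st c' (a + t) := by
  have hword : (List.ofFn fun j : Fin t => c (a + j)) = List.ofFn fun j : Fin t => c' (a + j) :=
    congrArg List.ofFn (funext fun j => hc j j.isLt)
  rw [st_add, st_add, hword]
  exact hP a (by omega) _ (List.length_ofFn) _ _ ⟨c, rfl⟩ ⟨c', rfl⟩

def segment (P : UP Q n) (a len : ℕ) (q₀ : Q) (final : Q → Prop) : UP Q len where
  init := q₀
  trans k := P.trans (a + k)
  acc k q := P.acc (a + k) q ∧ (k = len → final q)

theorem segment_st (P : UP Q n) {a len : ℕ} {final : Q → Prop} {c d : ℕ → Bool} :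
    ∀ k, (∀ j < k, d j = c (a + j)) → (P.segment a len (P.st c a) final).st d k = P.st c (a + k)
  | 0, _ => rfl
  | k + 1, hd => by
    simp only [st, segment_st P k fun j hj => hd j (by omega), hd k (Nat.lt_succ_self k)]
    rfl

theorem segment_accepts_iff (P : UP Q n) {a len : ℕ} (hlen : 0 < len) {final : Q → Prop}
    {c d : ℕ → Bool} (hd : ∀ j < len, d j = c (a + j)) :
    (P.segment a len (P.st c a) final).accepts d ↔
      P.AcceptsLayers c a len ∧ final (P.st c (a + len)) := by
  have hst : ∀ k ≤ len, (P.segment a len (P.st c a) final).st d k = P.st c (a + k) :=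
    fun k hk => segment_st P k fun j hj => hd j (by omega)
  constructor
  · intro h
    refine ⟨fun k hk1 hk2 => ?_, ?_⟩
    · simpa only [hst k hk2] using (h k hk1 hk2).1
    · simpa only [hst len le_rfl] using (h len hlen le_rfl).2 rfl
  · rintro ⟨hlayers, hfinal⟩ k hk1 hk2
    rw [hst k hk2]
    exact ⟨hlayers k hk1 hk2, fun hk => hk ▸ hfinal⟩

end UP

theorem forall_lt_and_iff_forall_lt_and_succ {m : ℕ} {E O : ℕ → Prop} :
    (∀ i < m, E i ∧ O i) ↔ ∀ i < m, O i ∧ E 0 ∧ (i + 1 < m → E (i + 1)) := by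
  constructor
  · intro h i hi
    exact ⟨(h i hi).2, (h 0 (by omega)).1, fun hi' => (h (i + 1) hi').1⟩
  · intro h i hi
    refine ⟨?_, (h i hi).1⟩
    cases i with
    | zero => exact (h 0 hi).2.1
    | succ j => exact (h j (by omega)).2.2 hi

section Interleaving

variable {Q : Type} {t m : ℕ}

theorem il_odd_block (x y : Fin m → Bits t) (i : Fin m) {k : ℕ} (hk : k < t) :
    il x y ((2 * i + 1) * t + k) = y i ⟨k, hk⟩ := by
  have ht : 0 < t := by omega
  have hdiv : ((2 * i + 1) * t + k) / t = 2 * i + 1 := by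
    rw [Nat.add_comm, Nat.add_mul_div_right _ _ ht, Nat.div_eq_of_lt hk, Nat.zero_add]
  have hmod : ((2 * i + 1) * t + k) % t = k := by
    rw [Nat.add_comm, Nat.add_mul_mod_self_right, Nat.mod_eq_of_lt hk]
  have hhalf : (2 * (i : ℕ) + 1) / 2 = i := by omega
  simp [il, hdiv, hmod, hhalf, hk, Nat.add_mod]

theorem il_even_block (x y y' : Fin m → Bits t) (j : ℕ) {k : ℕ} (hk : k < t) :
    il x y (2 * j * t + k) = il x y' (2 * j * t + k) := by
  have ht : 0 < t := by omega
  have hdiv : (2 * j * t + k) / t = 2 * j := by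
    rw [Nat.add_comm, Nat.add_mul_div_right _ _ ht, Nat.div_eq_of_lt hk, Nat.zero_add]
  simp [il, hdiv]

theorem UP.accepts_iff_forall_blocks (P : UP Q (2 * t * m)) (c : ℕ → Bool) :
    P.accepts c ↔
      ∀ i < m, P.AcceptsLayers c (2 * i * t) t ∧ P.AcceptsLayers c ((2 * i + 1) * t) t := by
  have hblocks := P.acceptsLayers_mul c 0 (t + t) m
  rw [show m * (t + t) = 2 * t * m by ring] at hblocks
  rw [UP.accepts_iff_acceptsLayers, hblocks]
  refine forall₂_congr fun i _ => ?_
  rw [UP.acceptsLayers_add]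
  ring_nf

/-- The layers over the block `x_{j+1}` (blocks are numbered from `1` in the paper, from `0` here)
accept when entered in state `q`. -/
def xBlockAccepts (S : UP Q (2 * t * m)) (x : Fin m → Bits t) (j : ℕ) (q : Q) : Prop :=
  (S.segment (2 * j * t) t q fun _ => True).accepts
    fun k => il x (fun _ _ => false) (2 * j * t + k)

/-- The program `S_x^{i+1}` of the paper. -/
def yBlockProgram (S : UP Q (2 * t * m)) (x : Fin m → Bits t) (i : Fin m) : UP Q t :=
  S.segment ((2 * i + 1) * t) t (S.st (il x fun _ _ => false) ((2 * i + 1) * t)) fun q =>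
    xBlockAccepts S x 0 S.init ∧ (i + 1 < m → xBlockAccepts S x (i + 1) q)

variable (S : UP Q (2 * t * m)) (x y : Fin m → Bits t)

theorem xBlockAccepts_st_iff (ht : 0 < t) (j : ℕ) :
    xBlockAccepts S x j (S.st (il x y) (2 * j * t)) ↔ S.AcceptsLayers (il x y) (2 * j * t) t := by
  rw [xBlockAccepts, UP.segment_accepts_iff S ht fun k hk => il_even_block x _ y j hk,
    and_true]

theorem yBlockProgram_acceptsInput_iff (hS : S.IsSWBP t) (ht : 0 < t) (i : Fin m) :
    (yBlockProgram S x i).acceptsInput (y i) ↔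
      S.AcceptsLayers (il x y) ((2 * i + 1) * t) t ∧ S.AcceptsLayers (il x y) 0 t ∧
        (i + 1 < m → S.AcceptsLayers (il x y) (2 * (i + 1) * t) t) := by
  have hstart :
      S.st (il x fun _ _ => false) ((2 * i + 1) * t) = S.st (il x y) ((2 * i + 1) * t) := by
    rw [show (2 * i + 1) * t = 2 * i * t + t by ring]
    refine hS.st_eq ?_ fun k hk => il_even_block x _ y i hk
    nlinarith [i.isLt]
  have hend : (2 * i + 1) * t + t = 2 * (i + 1) * t := by ring
  have hfirst : xBlockAccepts S x 0 S.init ↔ S.AcceptsLayers (il x y) 0 t := by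
    simpa [UP.st] using xBlockAccepts_st_iff S x y ht 0
  rw [UP.acceptsInput, yBlockProgram, hstart, UP.segment_accepts_iff S ht, hend,
    xBlockAccepts_st_iff S x y ht, hfirst]
  · intro k hk
    simp [extBits, hk, il_odd_block x y i hk]

end Interleaving

/-- key decomposition: fixing the `x`-blocks of a width-`w`,
length-`2tm` SWBP of window size `t` yields `m` width-`w`, length-`t`
unanimity programs `S_x^i` with `S(x ⋈ y) = 1 ↔ ∀ i, S_x^i(y_i) = 1`. -/
theorem swbp_decomposition {w t m : ℕ} (S : UP (Fin w) (2 * t * m))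
    (hS : S.IsSWBP t) (x : Fin m → Bits t) :
    ∃ Sx : Fin m → UP (Fin w) t,
      ∀ y : Fin m → Bits t,
        (S.accepts (il x y) ↔ ∀ i, (Sx i).acceptsInput (y i)) := by
  refine ⟨yBlockProgram S x, fun y => ?_⟩
  rcases Nat.eq_zero_or_pos t with rfl | ht
  · exact iff_of_true (fun k _ hk => by omega) fun i k _ hk => by omega
  simp only [UP.accepts_iff_forall_blocks, yBlockProgram_acceptsInput_iff S x y hS ht,
    Fin.forall_iff]
  simpa using forall_lt_and_iff_forall_lt_and_succ
    (E := fun i => S.AcceptsLayers (il x y) (2 * i * t) t)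
    (O := fun i => S.AcceptsLayers (il x y) ((2 * i + 1) * t) t)
end
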